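/- The logarithmic-erosion is conjugate to the classical erosion via ξ: ε_b⊕(f) = M(1 - exp(-ε_{b́}(f́)/M)) where f́ = -M·ln(1 - f/M), b́ = -M·ln(1 - b/M), and ε_{b́}(g)(x) = inf_h (g(x+h) - b́(h)). -/
import Mathlib

open Filter Topology


/-- LIP difference `a ⊖ c = (a - c)/(1 - c/M)` extended with `(-∞) ⊖ c = -∞`. -/
noncomputable def lipSubE (M : ℝ) (a : EReal) (c : ℝ) : EReal :=
  if a = ⊥ then ⊥
  else if a = ⊤ then ⊤
  else (((a.toReal - c) / (1 - c / M) : ℝ) : EReal)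

/-- Logarithmic-erosion `ε_b⊕(f)(x) = inf_{h ∈ D_b} (f(x + h) ⊖ b(h))`. -/
noncomputable def lipEro {D : Type*} [AddGroup D] (M : ℝ) (Db : Set D) (b : D → ℝ)
    (f : D → EReal) (x : D) : EReal :=
  ⨅ h ∈ Db, lipSubE M (f (x + h)) (b h)

/-- Classical flat-extended erosion with an additive structuring function:
`ε_b́(g)(x) = inf_{h ∈ D_b} (g(x + h) - b́(h))` on extended-real-valued
functions, with the conventions `(-∞) - c = -∞`, `(+∞) - c = +∞`. -/
noncomputable def classEro {D : Type*} [AddGroup D] (Db : Set D) (bp : D → ℝ)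
    (g : D → EReal) (x : D) : EReal :=
  ⨅ h ∈ Db, (g (x + h) - (bp h : EReal))

/-- `ξ(t) = M(1 - exp(-t/M))`, extended by `ξ(-∞) = -∞`, `ξ(+∞) = M`. -/
noncomputable def xiE (M : ℝ) (t : EReal) : EReal :=
  if t = ⊥ then ⊥
  else if t = ⊤ then (M : EReal)
  else ((M * (1 - Real.exp (-t.toReal / M)) : ℝ) : EReal)

/-- `ξ⁻¹(a) = -M·ln(1 - a/M)`, extended by `ξ⁻¹(-∞) = -∞`, `ξ⁻¹(M) = +∞`. -/
noncomputable def xiInvE (M : ℝ) (a : EReal) : EReal :=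
  if a = ⊥ then ⊥
  else if a = (M : EReal) then ⊤
  else ((-M * Real.log (1 - a.toReal / M) : ℝ) : EReal)

lemma xiE_coe (M : ℝ) (r : ℝ) : xiE M r = ((M * (1 - Real.exp (-r / M)) : ℝ) : EReal) := by
  simp [xiE]

lemma xiE_mono (M : ℝ) (hM : 0 < M) : Monotone (xiE M) := by
  intro t s hts
  induction t using EReal.rec with
  | bot => simp [xiE]
  | top => rw [top_le_iff.1 hts]
  | coe r =>
    induction s using EReal.rec with
    | bot => exact absurd hts (by simp)
    | top =>
      rw [xiE_coe]
      simp only [xiE, if_neg (by simp : (⊤:EReal) ≠ ⊥), if_pos rfl, if_true]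
      rw [EReal.coe_le_coe_iff]
      nlinarith [Real.exp_pos (-r / M)]
    | coe q =>
      rw [xiE_coe, xiE_coe, EReal.coe_le_coe_iff]
      have : Real.exp (-q / M) ≤ Real.exp (-r / M) := by
        apply Real.exp_le_exp.2
        have := EReal.coe_le_coe_iff.1 hts
        have hM' := hM
        rw [div_le_div_iff_of_pos_right hM]  -- guess name
        linarith
      nlinarith

lemma xiE_le (M : ℝ) (hM : 0 < M) (t : EReal) : xiE M t ≤ (M : EReal) := by
  induction t using EReal.rec with
  | bot => simp [xiE]
  | top => simp [xiE]
  | coe r =>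
    rw [xiE_coe, EReal.coe_le_coe_iff]
    nlinarith [Real.exp_pos (-r / M)]

lemma xiE_cont (M : ℝ) (hM : 0 < M) : Continuous (xiE M) := by
  rw [continuous_iff_continuousAt]
  intro t
  induction t using EReal.rec with
  | bot =>
    have hb : xiE M ⊥ = ⊥ := by simp [xiE]
    rw [ContinuousAt, hb, EReal.tendsto_nhds_bot_iff_real]
    intro r
    set s : ℝ := -M * Real.log (max (1 - r / M) 0 + 1) with hs
    have hexp : Real.exp (-s / M) = max (1 - r / M) 0 + 1 := by
      rw [hs]
      rw [show -(-M * Real.log (max (1 - r / M) 0 + 1)) / M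
          = Real.log (max (1 - r / M) 0 + 1) by field_simp]
      exact Real.exp_log (by positivity)
    have hsr : xiE M s < (r : EReal) := by
      rw [xiE_coe, EReal.coe_lt_coe_iff, hexp]
      have h1 : 1 - r / M ≤ max (1 - r / M) 0 := le_max_left _ _
      have : M * (1 - (max (1 - r / M) 0 + 1)) < M * (r / M) := by
        have : 1 - (max (1 - r / M) 0 + 1) < r / M := by
          have := le_max_left (1 - r / M) 0
          nlinarith [le_max_right (1 - r / M) (0:ℝ)]
        nlinarith
      calc M * (1 - (max (1 - r / M) 0 + 1)) < M * (r / M) := this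
        _ = r := by field_simp
    filter_upwards [Iio_mem_nhds (show (⊥:EReal) < (s:EReal) from bot_lt_iff_ne_bot.2 (by simp))]
      with u hu
    exact lt_of_le_of_lt (xiE_mono M hM (le_of_lt hu)) hsr
  | top =>
    have ht : xiE M ⊤ = (M : EReal) := by simp [xiE]
    rw [ContinuousAt, ht, tendsto_order]
    constructor
    · intro a ha
      have : ∃ s : ℝ, a < xiE M s := by
        induction a using EReal.rec with
        | bot => exact ⟨0, by rw [xiE_coe]; exact bot_lt_iff_ne_bot.2 (by simp)⟩
        | top => exact absurd ha (by simp)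
        | coe aR =>
          have haR : aR < M := EReal.coe_lt_coe_iff.1 ha
          refine ⟨-M * Real.log (1 - aR / M) + 1, ?_⟩
          rw [xiE_coe, EReal.coe_lt_coe_iff]
          have hpos : 0 < 1 - aR / M := by
            have : aR / M < 1 := (div_lt_one hM).2 haR
            linarith
          have hexp : Real.exp (-(-M * Real.log (1 - aR / M) + 1) / M)
              = (1 - aR / M) * Real.exp (-(1/ M)) := by
            rw [show -(-M * Real.log (1 - aR / M) + 1) / M
                = Real.log (1 - aR / M) + (-(1/M)) by field_simp; ring, Real.exp_add,
              Real.exp_log hpos]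
          rw [hexp]
          have he1 : Real.exp (-(1/M)) < 1 := by
            rw [Real.exp_lt_one_iff]
            simpa using one_div_pos.2 hM
          have h2 : (1 - aR / M) * Real.exp (-(1/M)) < 1 - aR / M := by nlinarith
          have hdiv : M * (aR / M) = aR := by field_simp
          nlinarith [mul_lt_mul_of_pos_left h2 hM]
      obtain ⟨s, hsa⟩ := this
      filter_upwards [Ioi_mem_nhds (show (s:EReal) < ⊤ from lt_top_iff_ne_top.2 (by simp))]
        with u hu
      exact lt_of_lt_of_le hsa (xiE_mono M hM (le_of_lt hu))
    · intro a ha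
      exact Filter.Eventually.of_forall fun u => lt_of_le_of_lt (xiE_le M hM u) ha
  | coe r =>
    rw [ContinuousAt, EReal.nhds_coe, tendsto_map'_iff]
    have heq : (xiE M ∘ (fun x : ℝ => (x : EReal))) =
        fun x : ℝ => ((M * (1 - Real.exp (-x / M)) : ℝ) : EReal) := by
      funext x; exact xiE_coe M x
    rw [heq, xiE_coe]
    exact (continuous_coe_real_ereal.comp (by continuity)).continuousAt

lemma key (M : ℝ) (hM : 0 < M) (a : EReal) (ha : a ≤ (M : EReal)) (c : ℝ) (hc : c < M) :
    lipSubE M a c = xiE M (xiInvE M a - ((-M * Real.log (1 - c / M) : ℝ) : EReal)) := by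
  have hC : 0 < 1 - c / M := by
    have : c / M < 1 := (div_lt_one hM).2 hc
    linarith
  induction a using EReal.rec with
  | bot =>
    simp only [lipSubE, xiInvE, if_pos rfl, if_true]
    rw [EReal.bot_sub]
    simp [xiE]
  | top => exact absurd ha (by simp [lt_top_iff_ne_top, EReal.coe_lt_top])
  | coe r =>
    have hrM : r ≤ M := EReal.coe_le_coe_iff.1 ha
    by_cases hrMeq : r = M
    · subst hrMeq
      simp only [lipSubE, xiInvE, if_neg (by simp : ((r:ℝ):EReal) ≠ ⊥),
        if_neg (by simp : ((r:ℝ):EReal) ≠ ⊤), if_pos rfl, EReal.toReal_coe, if_true]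
      rw [EReal.top_sub_coe]
      simp only [xiE, if_neg (by simp : (⊤:EReal) ≠ ⊥), if_pos rfl, if_true]
      congr 1
      have hrc : r - c ≠ 0 := by linarith
      field_simp
    · have hrlt : r < M := lt_of_le_of_ne hrM hrMeq
      have hA : 0 < 1 - r / M := by
        have : r / M < 1 := (div_lt_one hM).2 hrlt
        linarith
      have hne : ((r:ℝ):EReal) = ((M:ℝ):EReal) ↔ False := by
        simp [EReal.coe_eq_coe_iff, hrMeq]
      simp only [lipSubE, xiInvE, if_neg (by simp : ((r:ℝ):EReal) ≠ ⊥),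
        if_neg (by simp : ((r:ℝ):EReal) ≠ ⊤), hne, if_false, EReal.toReal_coe]
      rw [← EReal.coe_sub, xiE_coe, EReal.coe_eq_coe_iff]
      have hexp : Real.exp (-(-M * Real.log (1 - r / M) - -M * Real.log (1 - c / M)) / M)
          = (1 - r / M) / (1 - c / M) := by
        rw [show -(-M * Real.log (1 - r / M) - -M * Real.log (1 - c / M)) / M
            = Real.log (1 - r / M) - Real.log (1 - c / M) by field_simp; ring,
          Real.exp_sub, Real.exp_log hA, Real.exp_log hC]
      rw [hexp]
      have hMc : M - c ≠ 0 := by linarith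
      have hMc' : -c + M ≠ 0 := by linarith
      field_simp
      ring

/-- The logarithmic-erosion is conjugate to the classical erosion via `ξ`:
`ε_b⊕(f) = ξ ∘ ε_b́ (f́)` where `f́ = ξ⁻¹ ∘ f` and `b́ = ξ⁻¹ ∘ b`, i.e.
`ε_b⊕(f) = M(1 - exp(-ε_b́(f́)/M))` with `f́ = -M ln(1 - f/M)`,
`b́ = -M ln(1 - b/M)`. -/
theorem lipEro_conj {D : Type*} [AddGroup D] (M : ℝ) (hM : 0 < M)
    (Db : Set D) (hDb : Db.Nonempty) (b : D → ℝ) (hb : ∀ h ∈ Db, b h < M)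
    (f : D → EReal) (hf : ∀ x, f x ≤ (M : EReal)) (x : D) :
    lipEro M Db b f x =
      xiE M (classEro Db (fun h => -M * Real.log (1 - b h / M))
        (fun y => xiInvE M (f y)) x) := by
  have hne : Nonempty ↥Db := hDb.to_subtype
  rw [lipEro, classEro]
  set G : D → EReal :=
    fun h => xiInvE M (f (x + h)) - ((-M * Real.log (1 - b h / M) : ℝ) : EReal) with hG
  have step1 : (⨅ h ∈ Db, lipSubE M (f (x + h)) (b h)) = ⨅ h ∈ Db, xiE M (G h) :=
    iInf_congr fun h => iInf_congr fun hh => key M hM _ (hf _) _ (hb h hh)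
  rw [step1, ← iInf_subtype'' Db (fun h => xiE M (G h)), ← iInf_subtype'' Db G]
  exact (Monotone.map_ciInf_of_continuousAt ((xiE_cont M hM).continuousAt)
    (xiE_mono M hM) (OrderBot.bddBelow _)).symm
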